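/- For every p ∈ (1,∞) and every dimension d ≥ 1 there exists a constant C > 0 such that for all vectors a, b ∈ ℝ^d one has C^{−1}|b|²(|a|+|b|)^{p−2} ≤ |a+b|^p − |a|^p − p|a|^{p−2}a·b ≤ C|b|²(|a|+|b|)^{p−2}, with the conventions |a|^{p−2}a = 0 when a = 0 and 0·(0)^{p−2} = 0 when a = b = 0. -/

import Mathlib

/-!
Write `G x = ‖x‖ ^ (p - 2) • x`, so that `p • G` is the gradient of `‖·‖ ^ p`. Along the segment
`t ↦ a + t • b` the fundamental theorem of calculus gives
`‖a + b‖ ^ p - ‖a‖ ^ p - p ⟪G a, b⟫ = p ∫₀¹ ⟪G (a + t • b) - G a, b⟫ dt`,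
and `t` times the integrand is the monotonicity pairing `⟪G x - G y, x - y⟫` at `x = a + t • b`,
`y = a`. This pairing is comparable to `‖x - y‖² (‖x‖ + ‖y‖) ^ (p - 2)`: both are affine in
`⟪x, y⟫`, so it suffices to compare them when `x` and `y` point in the same or in opposite
directions, where everything reduces to `s ^ α - r ^ α ≍ (s - r) (s + r) ^ (α - 1)` and
`s ^ α + r ^ α ≍ (s + r) ^ α`. Since `‖a + t • b‖ + ‖a‖` lies between `t (‖a‖ + ‖b‖) / 2` and
`2 (‖a‖ + ‖b‖)`, integrating in `t` gives both bounds.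
-/

open scoped RealInnerProductSpace

noncomputable section

abbrev Ed (d : ℕ) : Type := EuclideanSpace ℝ (Fin d)

open Real

section RpowInequalities

variable {α x y s r : ℝ}

lemma rpow_add_mul_sub_le_rpow (hα : 1 ≤ α) (hx : 0 ≤ x) (hy : 0 < y) :
    y ^ α + α * y ^ (α - 1) * (x - y) ≤ x ^ α := by
  have h := one_add_mul_self_le_rpow_one_add (s := x / y - 1)
    (by linarith [div_nonneg hx hy.le]) hα
  rw [add_sub_cancel, div_rpow hx hy.le, le_div_iff₀ (rpow_pos_of_pos hy α)] at h
  rw [rpow_sub_one hy.ne']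
  have hexpand : y ^ α + α * (y ^ α / y) * (x - y) = (1 + α * (x / y - 1)) * y ^ α := by
    field_simp
  linarith

lemma rpow_le_rpow_add_mul_sub (hα₀ : 0 ≤ α) (hα₁ : α ≤ 1) (hx : 0 ≤ x) (hy : 0 < y) :
    x ^ α ≤ y ^ α + α * y ^ (α - 1) * (x - y) := by
  have h := rpow_one_add_le_one_add_mul_self (s := x / y - 1)
    (by linarith [div_nonneg hx hy.le]) hα₀ hα₁
  rw [add_sub_cancel, div_rpow hx hy.le, div_le_iff₀ (rpow_pos_of_pos hy α)] at h
  rw [rpow_sub_one hy.ne']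
  have hexpand : y ^ α + α * (y ^ α / y) * (x - y) = (1 + α * (x / y - 1)) * y ^ α := by
    field_simp
  linarith

lemma exists_mul_rpow_le_rpow_sub_rpow (hα : 0 < α) :
    ∃ c > 0, ∀ ⦃s r : ℝ⦄, 0 ≤ r → r ≤ s → c * ((s - r) * (s + r) ^ (α - 1)) ≤ s ^ α - r ^ α := by
  rcases le_or_gt 1 α with hα₁ | hα₁
  · refine ⟨2 ^ (1 - α), by positivity, fun s r hr hrs => ?_⟩
    have hr_le : r ^ α ≤ s ^ (α - 1) * r := by
      calc r ^ α = r ^ (α - 1) * r := by rw [← rpow_add_one' hr (by linarith), sub_add_cancel]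
        _ ≤ s ^ (α - 1) * r := by gcongr
    have hs_eq : s ^ α = s ^ (α - 1) * s := by
      rw [← rpow_add_one' (hr.trans hrs) (by linarith), sub_add_cancel]
    have hmid : 2 ^ (1 - α) * (s + r) ^ (α - 1) ≤ s ^ (α - 1) := by
      calc 2 ^ (1 - α) * (s + r) ^ (α - 1) = ((s + r) / 2) ^ (α - 1) := by
            rw [div_rpow (by linarith) zero_le_two, div_eq_mul_inv, ← rpow_neg zero_le_two,
              neg_sub, mul_comm]
        _ ≤ s ^ (α - 1) := by gcongr <;> linarith
    nlinarith [mul_le_mul_of_nonneg_right hmid (sub_nonneg.2 hrs)]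
  · refine ⟨α, hα, fun s r hr hrs => ?_⟩
    rcases (hr.trans hrs).eq_or_lt with hs | hs
    · obtain rfl : r = 0 := by linarith
      simp [← hs]
    have htangent := rpow_le_rpow_add_mul_sub hα.le hα₁.le hr hs
    have hmono : (s + r) ^ (α - 1) ≤ s ^ (α - 1) :=
      rpow_le_rpow_of_nonpos hs (by linarith) (by linarith)
    nlinarith [mul_le_mul_of_nonneg_left hmono (mul_nonneg hα.le (sub_nonneg.2 hrs))]

lemma exists_rpow_sub_rpow_le_mul_rpow (hα : 0 < α) :
    ∃ C > 0, ∀ ⦃s r : ℝ⦄, 0 ≤ r → r ≤ s → s ^ α - r ^ α ≤ C * ((s - r) * (s + r) ^ (α - 1)) := by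
  rcases le_or_gt 1 α with hα₁ | hα₁
  · refine ⟨α, hα, fun s r hr hrs => ?_⟩
    rcases (hr.trans hrs).eq_or_lt with hs | hs
    · obtain rfl : r = 0 := by linarith
      simp [← hs]
    have htangent := rpow_add_mul_sub_le_rpow hα₁ hr hs
    have hmono : s ^ (α - 1) ≤ (s + r) ^ (α - 1) := by gcongr; linarith
    nlinarith [mul_le_mul_of_nonneg_left hmono (mul_nonneg hα.le (sub_nonneg.2 hrs))]
  · refine ⟨4, by norm_num, fun s r hr hrs => ?_⟩
    rcases le_or_gt (2 * r) s with hsr | hsr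
    · rcases (hr.trans hrs).eq_or_lt with hs | hs
      · obtain rfl : r = 0 := by linarith
        simp [← hs]
      have hmono : (2 * s) ^ (α - 1) ≤ (s + r) ^ (α - 1) :=
        rpow_le_rpow_of_nonpos (by linarith) (by linarith) (by linarith)
      calc s ^ α - r ^ α ≤ (2 * s) ^ α := by
            linarith [rpow_nonneg hr α, rpow_le_rpow hs.le (by linarith : s ≤ 2 * s) hα.le]
        _ = 2 * s * (2 * s) ^ (α - 1) := by
            rw [mul_comm (2 * s), ← rpow_add_one' (by linarith) (by linarith), sub_add_cancel]
        _ ≤ 4 * (s - r) * (s + r) ^ (α - 1) :=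
            mul_le_mul (by linarith) hmono (rpow_nonneg (by linarith) _) (by linarith)
        _ = 4 * ((s - r) * (s + r) ^ (α - 1)) := by ring
    · have hr₀ : 0 < r := by linarith
      have hmono : r ^ (α - 1) ≤ ((s + r) / 4) ^ (α - 1) :=
        rpow_le_rpow_of_nonpos (by linarith) (by linarith) (by linarith)
      have hquarter : ((s + r) / 4) ^ (α - 1) ≤ 4 * (s + r) ^ (α - 1) := by
        rw [div_rpow (by linarith) (by norm_num), div_eq_mul_inv, mul_comm,
          ← rpow_neg (by norm_num), neg_sub]
        refine mul_le_mul_of_nonneg_right ?_ (rpow_nonneg (by linarith) _)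
        calc (4 : ℝ) ^ (1 - α) ≤ 4 ^ (1 : ℝ) :=
              rpow_le_rpow_of_exponent_le (by norm_num) (by linarith)
          _ = 4 := rpow_one 4
      calc s ^ α - r ^ α ≤ α * r ^ (α - 1) * (s - r) := by
            linarith [rpow_le_rpow_add_mul_sub hα.le hα₁.le (hr.trans hrs) hr₀]
        _ ≤ 1 * (4 * (s + r) ^ (α - 1)) * (s - r) := by
            gcongr
            exact hmono.trans hquarter
        _ = 4 * ((s - r) * (s + r) ^ (α - 1)) := by ring

lemma exists_mul_rpow_sub_rpow_bounds (hα : 0 < α) :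
    ∃ c C : ℝ, 0 < c ∧ 0 < C ∧ ∀ ⦃s r : ℝ⦄, 0 ≤ s → 0 ≤ r →
      c * ((s - r) ^ 2 * (s + r) ^ (α - 1)) ≤ (s - r) * (s ^ α - r ^ α) ∧
      (s - r) * (s ^ α - r ^ α) ≤ C * ((s - r) ^ 2 * (s + r) ^ (α - 1)) := by
  obtain ⟨c, hc, hlow⟩ := exists_mul_rpow_le_rpow_sub_rpow hα
  obtain ⟨C, hC, hupp⟩ := exists_rpow_sub_rpow_le_mul_rpow hα
  have hordered : ∀ ⦃s r : ℝ⦄, 0 ≤ r → r ≤ s →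
      c * ((s - r) ^ 2 * (s + r) ^ (α - 1)) ≤ (s - r) * (s ^ α - r ^ α) ∧
      (s - r) * (s ^ α - r ^ α) ≤ C * ((s - r) ^ 2 * (s + r) ^ (α - 1)) := by
    intro s r hr hrs
    have hsr : 0 ≤ s - r := sub_nonneg.2 hrs
    constructor
    · nlinarith [mul_le_mul_of_nonneg_left (hlow hr hrs) hsr]
    · nlinarith [mul_le_mul_of_nonneg_left (hupp hr hrs) hsr]
  refine ⟨c, C, hc, hC, fun s r hs hr => ?_⟩
  rcases le_total r s with hrs | hsr
  · exact hordered hr hrs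
  · have h := hordered hs hsr
    rw [add_comm r s] at h
    constructor <;> nlinarith [h.1, h.2]

lemma rpow_add_rpow_le_two_mul_rpow_add (hα : 0 ≤ α) (hs : 0 ≤ s) (hr : 0 ≤ r) :
    s ^ α + r ^ α ≤ 2 * (s + r) ^ α := by
  have h₁ : s ^ α ≤ (s + r) ^ α := by gcongr; linarith
  have h₂ : r ^ α ≤ (s + r) ^ α := by gcongr; linarith
  linarith

lemma two_rpow_neg_mul_rpow_add_le_rpow_add_rpow (hα : 0 ≤ α) (hs : 0 ≤ s) (hr : 0 ≤ r) :
    2 ^ (-α) * (s + r) ^ α ≤ s ^ α + r ^ α := by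
  have hmax : (s + r) ^ α ≤ 2 ^ α * max s r ^ α := by
    rw [← mul_rpow zero_le_two (le_max_of_le_left hs)]
    gcongr
    linarith [le_max_left s r, le_max_right s r]
  have hmax' : max s r ^ α ≤ s ^ α + r ^ α := by
    rcases le_total r s with h | h
    · rw [max_eq_left h]; linarith [rpow_nonneg hr α]
    · rw [max_eq_right h]; linarith [rpow_nonneg hs α]
  calc 2 ^ (-α) * (s + r) ^ α ≤ 2 ^ (-α) * (2 ^ α * max s r ^ α) := by gcongr
    _ = max s r ^ α := by
      rw [← mul_assoc, ← rpow_add zero_lt_two, neg_add_cancel, rpow_zero, one_mul]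
    _ ≤ s ^ α + r ^ α := hmax'

end RpowInequalities

lemma add_mul_nonneg_of_abs_le {a b m u : ℝ} (hu : |u| ≤ m) (h₁ : 0 ≤ a + b * m)
    (h₂ : 0 ≤ a - b * m) : 0 ≤ a + b * u := by
  obtain ⟨h₃, h₄⟩ := abs_le.mp hu
  rcases le_total 0 b with hb | hb <;> nlinarith

lemma mul_rpow_sub_two_bounds {p t W x : ℝ} (hp : 1 ≤ p) (ht₀ : 0 < t) (ht₁ : t ≤ 1)
    (hW : 0 < W) (hlo : t * W ≤ 2 * x) (hhi : x ≤ 2 * W) :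
    2 ^ (-|p - 2|) * t ^ p * W ^ (p - 2) ≤ t * x ^ (p - 2) ∧
      t * x ^ (p - 2) ≤ 2 ^ |p - 2| * (t + t ^ (p - 1)) * W ^ (p - 2) := by
  have hx : 0 < x := by nlinarith
  have htp : t ^ p = t * t ^ (p - 1) := by rw [← rpow_one_add' ht₀.le (by linarith)]; ring_nf
  have htp' : t ^ (p - 1) = t * t ^ (p - 2) := by
    rw [show p - 1 = 1 + (p - 2) by ring, rpow_add ht₀, rpow_one]
  have htle : t ^ (p - 1) ≤ 1 := rpow_le_one ht₀.le ht₁ (by linarith)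
  have h2W : (2 * W) ^ (p - 2) = 2 ^ (p - 2) * W ^ (p - 2) := mul_rpow zero_le_two hW.le
  have htW : (t * W / 2) ^ (p - 2) = 2 ^ (-(p - 2)) * t ^ (p - 2) * W ^ (p - 2) := by
    rw [div_rpow (by positivity) zero_le_two, mul_rpow ht₀.le hW.le, rpow_neg zero_le_two]
    ring
  have hWpos := rpow_pos_of_pos hW (p - 2)
  have h2 := rpow_pos_of_pos two_pos (p - 2)
  have h2' := rpow_pos_of_pos two_pos (-(p - 2))
  have htpos := rpow_pos_of_pos ht₀ (p - 1)
  rcases le_total 2 p with hp2 | hp2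
  · rw [abs_of_nonneg (by linarith)]
    have hlow : (t * W / 2) ^ (p - 2) ≤ x ^ (p - 2) := by gcongr; linarith
    have hupp : x ^ (p - 2) ≤ (2 * W) ^ (p - 2) := by gcongr
    constructor
    · nlinarith [mul_le_mul_of_nonneg_left hlow ht₀.le, mul_le_mul_of_nonneg_left ht₁ htpos.le,
        mul_pos h2' hWpos]
    · nlinarith [mul_le_mul_of_nonneg_left hupp ht₀.le, mul_pos h2 hWpos]
  · rw [abs_of_nonpos (by linarith), neg_neg]
    have hlow : (2 * W) ^ (p - 2) ≤ x ^ (p - 2) := rpow_le_rpow_of_nonpos hx hhi (by linarith)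
    have hupp : x ^ (p - 2) ≤ (t * W / 2) ^ (p - 2) :=
      rpow_le_rpow_of_nonpos (by positivity) (by linarith) (by linarith)
    constructor
    · nlinarith [mul_le_mul_of_nonneg_left hlow ht₀.le, mul_le_mul_of_nonneg_left htle ht₀.le,
        mul_pos h2 hWpos]
    · nlinarith [mul_le_mul_of_nonneg_left hupp ht₀.le, mul_pos h2' hWpos]

lemma integral_bounds_of_rpow_bounds {g : ℝ → ℝ} {p A B : ℝ} (hp : 0 < p) (hg : Continuous g)
    (hbounds : ∀ t ∈ Set.Ioo (0 : ℝ) 1, A * t ^ p ≤ g t ∧ g t ≤ B * (t + t ^ (p - 1))) :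
    A / (p + 1) ≤ ∫ t in (0 : ℝ)..1, g t ∧ ∫ t in (0 : ℝ)..1, g t ≤ B * (1 / 2 + 1 / p) := by
  have hpow : ∀ {q : ℝ}, -1 < q →
      IntervalIntegrable (fun t : ℝ => t ^ q) MeasureTheory.volume 0 1 :=
    fun hq => intervalIntegral.intervalIntegrable_rpow' hq
  have hint_low : ∫ t in (0 : ℝ)..1, A * t ^ p = A / (p + 1) := by
    rw [intervalIntegral.integral_const_mul, integral_rpow (Or.inl (by linarith))]
    simp only [one_rpow, zero_rpow (by linarith : p + 1 ≠ 0), sub_zero, one_div]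
    ring
  have hint_upp : ∫ t in (0 : ℝ)..1, B * (t + t ^ (p - 1)) = B * (1 / 2 + 1 / p) := by
    rw [intervalIntegral.integral_const_mul,
      intervalIntegral.integral_add intervalIntegral.intervalIntegrable_id (hpow (by linarith)),
      integral_id, integral_rpow (Or.inl (by linarith))]
    simp [zero_rpow hp.ne']
  constructor
  · rw [← hint_low]
    exact intervalIntegral.integral_mono_on_of_le_Ioo zero_le_one ((hpow (by linarith)).const_mul A)
      (hg.intervalIntegrable 0 1) fun t ht => (hbounds t ht).1
  · rw [← hint_upp]
    exact intervalIntegral.integral_mono_on_of_le_Ioo zero_le_one (hg.intervalIntegrable 0 1)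
      ((intervalIntegral.intervalIntegrable_id.add (hpow (by linarith))).const_mul B)
      fun t ht => (hbounds t ht).2

section InnerProductSpace

variable {E : Type*} [NormedAddCommGroup E] [InnerProductSpace ℝ E] {p : ℝ}

theorem exists_inner_rpow_smul_sub_bounds (hp : 1 < p) :
    ∃ c C : ℝ, 0 < c ∧ 0 < C ∧ ∀ x y : E,
      c * (‖x - y‖ ^ 2 * (‖x‖ + ‖y‖) ^ (p - 2)) ≤
        ⟪‖x‖ ^ (p - 2) • x - ‖y‖ ^ (p - 2) • y, x - y⟫ ∧
      ⟪‖x‖ ^ (p - 2) • x - ‖y‖ ^ (p - 2) • y, x - y⟫ ≤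
        C * (‖x - y‖ ^ 2 * (‖x‖ + ‖y‖) ^ (p - 2)) := by
  obtain ⟨c₁, C₁, hc₁, hC₁, hdiff⟩ := exists_mul_rpow_sub_rpow_bounds (α := p - 1) (by linarith)
  set c := min c₁ (2 ^ (1 - p))
  set C := max C₁ 2
  refine ⟨c, C, by positivity, by positivity, fun x y => ?_⟩
  have hs := norm_nonneg x
  have hr := norm_nonneg y
  have hu : |⟪x, y⟫| ≤ ‖x‖ * ‖y‖ := abs_real_inner_le_norm x y
  have hinner : ⟪‖x‖ ^ (p - 2) • x - ‖y‖ ^ (p - 2) • y, x - y⟫ =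
      ‖x‖ ^ (p - 2) * ‖x‖ ^ 2 + ‖y‖ ^ (p - 2) * ‖y‖ ^ 2 -
        (‖x‖ ^ (p - 2) + ‖y‖ ^ (p - 2)) * ⟪x, y⟫ := by
    simp only [inner_sub_left, inner_sub_right, real_inner_smul_left, real_inner_self_eq_norm_sq,
      real_inner_comm x y]
    ring
  rw [hinner, norm_sub_sq_real]
  -- Both sides are affine in `u = ⟪x, y⟫`, so it suffices to check them at `u = ± ‖x‖ ‖y‖`.
  obtain ⟨hA₁, hA₂⟩ := hdiff hs hr
  have hB₁ := two_rpow_neg_mul_rpow_add_le_rpow_add_rpow (α := p - 1) (by linarith) hs hr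
  have hB₂ := rpow_add_rpow_le_two_mul_rpow_add (α := p - 1) (by linarith) hs hr
  set s := ‖x‖
  set r := ‖y‖
  set u := ⟪x, y⟫
  have hrpow : ∀ z : ℝ, 0 ≤ z → z ^ (p - 1) = z ^ (p - 2) * z := fun z hz => by
    rw [← rpow_add_one' hz (by linarith)]; ring_nf
  rw [show p - 1 - 1 = p - 2 by ring] at hA₁ hA₂
  rw [neg_sub] at hB₁
  simp only [hrpow s hs, hrpow r hr, hrpow (s + r) (by linarith)] at hB₁ hB₂ hA₁ hA₂
  set M := (s + r) ^ (p - 2)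
  have hM₁ : 0 ≤ (s - r) ^ 2 * M := mul_nonneg (sq_nonneg _) (rpow_nonneg (by linarith) _)
  have hM₂ : 0 ≤ (s + r) ^ 2 * M := mul_nonneg (sq_nonneg _) (rpow_nonneg (by linarith) _)
  constructor
  · have := add_mul_nonneg_of_abs_le
      (a := s ^ (p - 2) * s ^ 2 + r ^ (p - 2) * r ^ 2 - c * (s ^ 2 + r ^ 2) * M)
      (b := 2 * c * M - (s ^ (p - 2) + r ^ (p - 2))) hu
      (by nlinarith [mul_le_mul_of_nonneg_right (min_le_left c₁ (2 ^ (1 - p))) hM₁])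
      (by nlinarith [mul_le_mul_of_nonneg_right (min_le_right c₁ (2 ^ (1 - p))) hM₂])
    linarith
  · have := add_mul_nonneg_of_abs_le
      (a := C * (s ^ 2 + r ^ 2) * M - s ^ (p - 2) * s ^ 2 - r ^ (p - 2) * r ^ 2)
      (b := s ^ (p - 2) + r ^ (p - 2) - 2 * C * M) hu
      (by nlinarith [mul_le_mul_of_nonneg_right (le_max_left C₁ 2) hM₁])
      (by nlinarith [mul_le_mul_of_nonneg_right (le_max_right C₁ 2) hM₂])
    linarith

theorem continuous_norm_rpow_smul {q : ℝ} (hq : -1 < q) :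
    Continuous fun x : E => ‖x‖ ^ q • x := by
  refine continuous_iff_continuousAt.2 fun x => ?_
  rcases eq_or_ne x 0 with rfl | hx
  · have hlim : Filter.Tendsto (fun x : E => ‖x‖ ^ (q + 1)) (nhds 0) (nhds 0) := by
      simpa [zero_rpow (by linarith : q + 1 ≠ 0)] using
        (continuous_norm.rpow_const fun _ => Or.inr (by linarith : 0 ≤ q + 1)).tendsto (0 : E)
    rw [ContinuousAt, smul_zero]
    refine tendsto_zero_iff_norm_tendsto_zero.2 (hlim.congr fun y => ?_)
    rw [norm_smul, norm_rpow_of_nonneg (norm_nonneg y), norm_norm,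
      rpow_add_one' (norm_nonneg y) (by linarith)]
  · exact (continuous_norm.continuousAt.rpow_const (Or.inl (norm_ne_zero_iff.2 hx))).smul
      continuousAt_id

theorem hasDerivAt_norm_add_smul_rpow (hp : 1 < p) (a b : E) (t : ℝ) :
    HasDerivAt (fun t : ℝ => ‖a + t • b‖ ^ p)
      (p * ⟪‖a + t • b‖ ^ (p - 2) • (a + t • b), b⟫) t := by
  have hline : HasDerivAt (fun t : ℝ => a + t • b) b t := by
    simpa using ((hasDerivAt_id t).smul_const b).const_add a
  refine ((hasFDerivAt_norm_rpow (a + t • b) hp).comp_hasDerivAt t hline).congr_deriv ?_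
  simp only [smul_apply, innerSL_apply_apply, smul_eq_mul, real_inner_smul_left, mul_assoc]

theorem norm_add_rpow_sub_eq_integral (hp : 1 < p) (a b : E) :
    ‖a + b‖ ^ p - ‖a‖ ^ p - p * (‖a‖ ^ (p - 2) * ⟪a, b⟫) =
      p * ∫ t in (0 : ℝ)..1, ⟪‖a + t • b‖ ^ (p - 2) • (a + t • b) - ‖a‖ ^ (p - 2) • a, b⟫ := by
  have hcont : Continuous fun t : ℝ => ⟪‖a + t • b‖ ^ (p - 2) • (a + t • b), b⟫ :=
    ((continuous_norm_rpow_smul (by linarith)).comp (by fun_prop)).inner continuous_const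
  have hftc := intervalIntegral.integral_eq_sub_of_hasDerivAt
    (fun t _ => hasDerivAt_norm_add_smul_rpow hp a b t)
    ((hcont.const_mul p).intervalIntegrable 0 1)
  simp only [inner_sub_left]
  rw [intervalIntegral.integral_sub (hcont.intervalIntegrable 0 1) intervalIntegrable_const,
    mul_sub, ← intervalIntegral.integral_const_mul, hftc, intervalIntegral.integral_const]
  simp only [one_smul, zero_smul, add_zero, real_inner_smul_left, sub_zero, smul_eq_mul]
  ring

lemma norm_add_smul_add_norm_bounds (a b : E) {t : ℝ} (ht₀ : 0 ≤ t) (ht₁ : t ≤ 1) :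
    t * (‖a‖ + ‖b‖) ≤ 2 * (‖a + t • b‖ + ‖a‖) ∧ ‖a + t • b‖ + ‖a‖ ≤ 2 * (‖a‖ + ‖b‖) := by
  have hsub : t * ‖b‖ ≤ ‖a + t • b‖ + ‖a‖ := by
    simpa [norm_smul, abs_of_nonneg ht₀] using norm_sub_le (a + t • b) a
  have hadd : ‖a + t • b‖ ≤ ‖a‖ + t * ‖b‖ := by
    simpa [norm_smul, abs_of_nonneg ht₀] using norm_add_le a (t • b)
  have ha := norm_nonneg a
  have hb := norm_nonneg b
  constructor <;> nlinarith [norm_nonneg (a + t • b)]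

theorem exists_norm_add_rpow_sub_bounds (hp : 1 < p) :
    ∃ c C : ℝ, 0 < c ∧ 0 < C ∧ ∀ a b : E,
      c * (‖b‖ ^ 2 * (‖a‖ + ‖b‖) ^ (p - 2)) ≤
        ‖a + b‖ ^ p - ‖a‖ ^ p - p * (‖a‖ ^ (p - 2) * ⟪a, b⟫) ∧
      ‖a + b‖ ^ p - ‖a‖ ^ p - p * (‖a‖ ^ (p - 2) * ⟪a, b⟫) ≤
        C * (‖b‖ ^ 2 * (‖a‖ + ‖b‖) ^ (p - 2)) := by
  obtain ⟨c, C, hc, hC, hmono⟩ := exists_inner_rpow_smul_sub_bounds (E := E) hp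
  set K : ℝ := 2 ^ |p - 2|
  refine ⟨p * (c * K⁻¹ / (p + 1)), p * (C * K * (1 / 2 + 1 / p)), by positivity, by positivity,
    fun a b => ?_⟩
  rcases eq_or_ne b 0 with rfl | hb
  · simp
  have hW : 0 < ‖a‖ + ‖b‖ := by positivity
  set Z := ‖b‖ ^ 2 * (‖a‖ + ‖b‖) ^ (p - 2)
  rw [norm_add_rpow_sub_eq_integral hp]
  set g : ℝ → ℝ := fun t => ⟪‖a + t • b‖ ^ (p - 2) • (a + t • b) - ‖a‖ ^ (p - 2) • a, b⟫
  have hg : Continuous g :=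
    (((continuous_norm_rpow_smul (by linarith)).comp (by fun_prop)).sub continuous_const).inner
      continuous_const
  have hpointwise : ∀ t ∈ Set.Ioo (0 : ℝ) 1,
      c * K⁻¹ * Z * t ^ p ≤ g t ∧ g t ≤ C * K * Z * (t + t ^ (p - 1)) := by
    rintro t ⟨ht₀, ht₁⟩
    obtain ⟨hlo, hhi⟩ := norm_add_smul_add_norm_bounds a b ht₀.le ht₁.le
    obtain ⟨hw₁, hw₂⟩ := mul_rpow_sub_two_bounds hp.le ht₀ ht₁.le hW hlo hhi
    obtain ⟨hm₁, hm₂⟩ := hmono (a + t • b) a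
    rw [add_sub_cancel_left, inner_smul_right, norm_smul, norm_of_nonneg ht₀.le] at hm₁ hm₂
    set X := ‖a + t • b‖ + ‖a‖
    have hg₁ : c * (‖b‖ ^ 2 * (t * X ^ (p - 2))) ≤ g t :=
      le_of_mul_le_mul_left (by linarith) ht₀
    have hg₂ : g t ≤ C * (‖b‖ ^ 2 * (t * X ^ (p - 2))) :=
      le_of_mul_le_mul_left (by linarith) ht₀
    have hKinv : K⁻¹ = 2 ^ (-|p - 2|) := (rpow_neg zero_le_two _).symm
    constructor
    · calc c * K⁻¹ * Z * t ^ p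
            = c * (‖b‖ ^ 2 * (2 ^ (-|p - 2|) * t ^ p * (‖a‖ + ‖b‖) ^ (p - 2))) := by
            rw [hKinv]; ring
        _ ≤ c * (‖b‖ ^ 2 * (t * X ^ (p - 2))) := by gcongr
        _ ≤ g t := hg₁
    · calc g t ≤ C * (‖b‖ ^ 2 * (t * X ^ (p - 2))) := hg₂
        _ ≤ C * (‖b‖ ^ 2 * (K * (t + t ^ (p - 1)) * (‖a‖ + ‖b‖) ^ (p - 2))) := by gcongr
        _ = C * K * Z * (t + t ^ (p - 1)) := by ring
  obtain ⟨h₁, h₂⟩ := integral_bounds_of_rpow_bounds (by linarith) hg hpointwise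
  constructor
  · calc p * (c * K⁻¹ / (p + 1)) * Z = p * (c * K⁻¹ * Z / (p + 1)) := by ring
      _ ≤ _ := mul_le_mul_of_nonneg_left h₁ (by linarith)
  · calc _ ≤ p * (C * K * Z * (1 / 2 + 1 / p)) := mul_le_mul_of_nonneg_left h₂ (by linarith)
      _ = p * (C * K * (1 / 2 + 1 / p)) * Z := by ring

end InnerProductSpace

theorem statement_2_general (p : ℝ) (hp : 1 < p) (d : ℕ) :
    ∃ C : ℝ, 0 < C ∧ ∀ a b : Ed d,
      C⁻¹ * (‖b‖ ^ (2 : ℝ) * (‖a‖ + ‖b‖) ^ (p - 2)) ≤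
          ‖a + b‖ ^ p - ‖a‖ ^ p - p * (‖a‖ ^ (p - 2) * ⟪a, b⟫) ∧
        ‖a + b‖ ^ p - ‖a‖ ^ p - p * (‖a‖ ^ (p - 2) * ⟪a, b⟫) ≤
          C * (‖b‖ ^ (2 : ℝ) * (‖a‖ + ‖b‖) ^ (p - 2)) := by
  obtain ⟨c, C, hc, hC, hbounds⟩ := exists_norm_add_rpow_sub_bounds (E := Ed d) hp
  refine ⟨max C c⁻¹, by positivity, fun a b => ?_⟩
  obtain ⟨hlow, hupp⟩ := hbounds a b
  rw [rpow_two]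
  constructor
  · calc (max C c⁻¹)⁻¹ * (‖b‖ ^ 2 * (‖a‖ + ‖b‖) ^ (p - 2))
        ≤ c * (‖b‖ ^ 2 * (‖a‖ + ‖b‖) ^ (p - 2)) := by
          gcongr
          exact inv_le_of_inv_le₀ hc (le_max_right _ _)
      _ ≤ _ := hlow
  · exact hupp.trans (by gcongr; exact le_max_left _ _)

theorem statement_2 (p : ℝ) (hp : 1 < p) (d : ℕ) (hd : 1 ≤ d) :
    ∃ C : ℝ, 0 < C ∧ ∀ a b : Ed d,
      C⁻¹ * (‖b‖ ^ (2 : ℝ) * (‖a‖ + ‖b‖) ^ (p - 2)) ≤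
          ‖a + b‖ ^ p - ‖a‖ ^ p - p * (‖a‖ ^ (p - 2) * ⟪a, b⟫) ∧
        ‖a + b‖ ^ p - ‖a‖ ^ p - p * (‖a‖ ^ (p - 2) * ⟪a, b⟫) ≤
          C * (‖b‖ ^ (2 : ℝ) * (‖a‖ + ‖b‖) ^ (p - 2)) :=
  statement_2_general p hp d
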